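/- arXiv:math/0504527 — 2 statements merged into one kernel-verified Lean document; each statement's English description precedes it below -/
import Mathlib

section
/- Let c_1,...,c_m ≤ 0 be real numbers, extended to c_1,...,c_{2m} by c_{m+i} = c_i. Let h be a symmetric real 2m×2m matrix, and write indices ī = m+i. Then ∑_{i,j=1}^{2m} c_i h_{ij}^2 - 2 ∑_{i,j=1}^{m} c_i (h_{i j̄} h_{ī j} - h_{ij} h_{ī j̄}) ≤ 0. Moreover, if all c_i < 0, equality holds if and only if h_{ij} = -h_{ī j̄} and h_{i j̄} = h_{ī j} for all 1 ≤ i, j ≤ m. -/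
open Finset

/-! Splitting the indices `0, …, 2m-1` into pairs `(i, ī)` and completing squares gives
`∑_{i,j<2m} c_i h_{ij}^2 - 2 ∑_{i,j<m} c_i (h_{ij̄} h_{īj} - h_{ij} h_{īj̄})
  = ∑_{i,j<m} c_i ((h_{ij} + h_{īj̄})^2 + (h_{ij̄} - h_{īj})^2)`,
a combination of sums of squares with nonpositive weights. -/

theorem Finset.sum_range_two_mul {M : Type*} [AddCommMonoid M] (m : ℕ) (f : ℕ → M) :
    ∑ i ∈ range (2 * m), f i = ∑ i ∈ range m, (f i + f (m + i)) := by
  rw [two_mul, sum_range_add, ← sum_add_distrib]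

theorem sum_mul_sq_sub_two_mul_sum_eq_sum_mul_self_add_mul_self {R : Type*} [CommRing R]
    (m : ℕ) (c : ℕ → R) (h : ℕ → ℕ → R) (hext : ∀ i < m, c (m + i) = c i) :
    ∑ i ∈ range (2 * m), ∑ j ∈ range (2 * m), c i * h i j ^ 2
        - 2 * ∑ i ∈ range m, ∑ j ∈ range m,
            c i * (h i (m + j) * h (m + i) j - h i j * h (m + i) (m + j))
      = ∑ i ∈ range m, ∑ j ∈ range m,
          c i * ((h i j + h (m + i) (m + j)) * (h i j + h (m + i) (m + j))
            + (h i (m + j) - h (m + i) j) * (h i (m + j) - h (m + i) j)) := by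
  rw [sum_range_two_mul, mul_sum, ← sum_sub_distrib]
  refine sum_congr rfl fun i hi => ?_
  rw [sum_range_two_mul, sum_range_two_mul, ← sum_add_distrib, mul_sum, ← sum_sub_distrib]
  refine sum_congr rfl fun j _ => ?_
  rw [hext i (mem_range.mp hi)]
  ring

section WeightedDoubleSum

variable {ι κ R : Type*} [CommRing R] [LinearOrder R] [IsStrictOrderedRing R]
  {s : Finset ι} {t : Finset κ} {c : ι → R} {q : ι → κ → R}

theorem sum_sum_mul_nonpos (hc : ∀ i ∈ s, c i ≤ 0) (hq : ∀ i j, 0 ≤ q i j) :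
    ∑ i ∈ s, ∑ j ∈ t, c i * q i j ≤ 0 :=
  sum_nonpos fun i hi => sum_nonpos fun j _ => mul_nonpos_of_nonpos_of_nonneg (hc i hi) (hq i j)

theorem sum_sum_mul_eq_zero_iff_of_neg (hc : ∀ i ∈ s, c i < 0) (hq : ∀ i j, 0 ≤ q i j) :
    ∑ i ∈ s, ∑ j ∈ t, c i * q i j = 0 ↔ ∀ i ∈ s, ∀ j ∈ t, q i j = 0 := by
  have hterm : ∀ i ∈ s, ∀ j ∈ t, c i * q i j ≤ 0 := fun i hi j _ =>
    mul_nonpos_of_nonpos_of_nonneg (hc i hi).le (hq i j)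
  rw [sum_eq_zero_iff_of_nonpos fun i hi => sum_nonpos (hterm i hi)]
  refine forall₂_congr fun i hi => ?_
  rw [sum_eq_zero_iff_of_nonpos (hterm i hi)]
  simp only [mul_eq_zero, (hc i hi).ne, false_or]

end WeightedDoubleSum

theorem kahler_nonpos_ricci_algebraic_inequality_general
    (m : ℕ) (c : ℕ → ℝ) (h : ℕ → ℕ → ℝ)
    (hext : ∀ i < m, c (m + i) = c i)
    (hc : ∀ i < m, c i ≤ 0) :
    (∑ i ∈ range (2 * m), ∑ j ∈ range (2 * m), c i * (h i j) ^ 2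
        - 2 * ∑ i ∈ range m, ∑ j ∈ range m,
            c i * (h i (m + j) * h (m + i) j - h i j * h (m + i) (m + j)) ≤ 0)
      ∧ ((∀ i < m, c i < 0) →
          ((∑ i ∈ range (2 * m), ∑ j ∈ range (2 * m), c i * (h i j) ^ 2
              - 2 * ∑ i ∈ range m, ∑ j ∈ range m,
                  c i * (h i (m + j) * h (m + i) j - h i j * h (m + i) (m + j)) = 0)
            ↔ (∀ i < m, ∀ j < m,
                h i j = - h (m + i) (m + j) ∧ h i (m + j) = h (m + i) j))) := by
  rw [sum_mul_sq_sub_two_mul_sum_eq_sum_mul_self_add_mul_self m c h hext]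
  have hsq : ∀ i j, 0 ≤ (h i j + h (m + i) (m + j)) * (h i j + h (m + i) (m + j))
      + (h i (m + j) - h (m + i) j) * (h i (m + j) - h (m + i) j) :=
    fun _ _ => add_nonneg (mul_self_nonneg _) (mul_self_nonneg _)
  refine ⟨sum_sum_mul_nonpos (fun i hi => hc i (mem_range.mp hi)) hsq, fun hlt => ?_⟩
  rw [sum_sum_mul_eq_zero_iff_of_neg (fun i hi => hlt i (mem_range.mp hi)) hsq]
  simp only [mem_range, mul_self_add_mul_self_eq_zero]
  simp only [add_eq_zero_iff_eq_neg, sub_eq_zero]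

/-- Let `c 0, …, c (m-1) ≤ 0` be real numbers, extended by
`c (m+i) = c i`, and let `h` be a symmetric real `2m × 2m` matrix (indices `0,…,2m-1`,
with `ī = m+i`).  Then
`∑_{i,j<2m} c i h i j ^ 2 - 2 ∑_{i,j<m} c i (h i (m+j) * h (m+i) j - h i j * h (m+i) (m+j)) ≤ 0`.
Moreover, if all `c i < 0`, equality holds iff `h i j = - h (m+i) (m+j)` and
`h i (m+j) = h (m+i) j` for all `i, j < m`. -/
theorem kahler_nonpos_ricci_algebraic_inequality
    (m : ℕ) (c : ℕ → ℝ) (h : ℕ → ℕ → ℝ)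
    (hsym : ∀ i j, h i j = h j i)
    (hext : ∀ i < m, c (m + i) = c i)
    (hc : ∀ i < m, c i ≤ 0) :
    (∑ i ∈ range (2 * m), ∑ j ∈ range (2 * m), c i * (h i j) ^ 2
        - 2 * ∑ i ∈ range m, ∑ j ∈ range m,
            c i * (h i (m + j) * h (m + i) j - h i j * h (m + i) (m + j)) ≤ 0)
      ∧ ((∀ i < m, c i < 0) →
          ((∑ i ∈ range (2 * m), ∑ j ∈ range (2 * m), c i * (h i j) ^ 2
              - 2 * ∑ i ∈ range m, ∑ j ∈ range m,
                  c i * (h i (m + j) * h (m + i) j - h i j * h (m + i) (m + j)) = 0)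
            ↔ (∀ i < m, ∀ j < m,
                h i j = - h (m + i) (m + j) ∧ h i (m + j) = h (m + i) j))) :=
  kahler_nonpos_ricci_algebraic_inequality_general m c h hext hc
end

section
/- Let (M, g) be a Riemannian manifold with spin^c structure whose auxiliary line bundle has curvature F, and let σ₀ be a nonzero parallel spin^c spinor. Then for every k, ∑_l R_{kl} e_l · σ₀ = ∑_l F_{kl} e_l · σ₀, where R_{kl} is the Ricci curvature. In particular, if the spin^c structure comes from a spin structure (F = 0), then the metric is Ricci-flat. -/
/-!
Write `e_i` for Clifford multiplication, so `e_i e_j + e_j e_i = -2 δ_ij`, and fix `k`, putting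
`T_{lij} = R_{klij}`. Applying `e_l` to the curvature identity and summing over `l` gives
`∑_{l,i,j} T_{lij} e_l e_i e_j σ₀ = 2 ∑_l F_{kl} e_l σ₀`. The left side is an identity in the
Clifford algebra: moving one factor of `e_l e_i e_j` cyclically to the other end costs only
Kronecker-delta terms, which contract `T` to the Ricci tensor, while the sum of the three cyclic
arrangements vanishes by the Bianchi identity. This gives
`∑_{l,i,j} T_{lij} e_l e_i e_j = 2 ∑_i Ric_{ki} e_i`. When `F = 0`, the linear independence of the
`e_l σ₀` forces `Ric = 0`.
-/

open Finset

theorem Fintype.sum_sum_sum_rotate {ι M : Type*} [Fintype ι] [AddCommMonoid M]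
    (f : ι → ι → ι → M) : ∑ a, ∑ b, ∑ c, f a b c = ∑ a, ∑ b, ∑ c, f b c a := by
  symm
  rw [sum_comm]
  exact Finset.sum_congr rfl fun _ _ => sum_comm

section Clifford

variable {ι 𝕜 A : Type*} [Fintype ι] [DecidableEq ι] [CommRing 𝕜] [Ring A] [Algebra 𝕜 A]
  {e : ι → A} {T : ι → ι → ι → 𝕜}

theorem sum_smul_mul_mul_sub_rotate_left
    (he : ∀ i j, e i * e j + e j * e i = if i = j then -2 else 0)
    (hT : ∀ l i j, T l i j = -T l j i) :
    ∑ l, ∑ i, ∑ j, T l i j • (e l * e i * e j - e i * e j * e l)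
      = (4 : 𝕜) • ∑ i, (∑ l, T l i l) • e i := by
  have hmove : ∀ l i j, e l * e i * e j - e i * e j * e l
      = (e l * e i + e i * e l) * e j - e i * (e l * e j + e j * e l) := by
    intro l i j
    noncomm_ring
  have hdiag : ∀ l j, T l l j = -T l j l := fun l j => hT l l j
  simp only [hmove, he, ite_mul, neg_mul, zero_mul, mul_ite, mul_neg, mul_zero, smul_sub, smul_ite,
    smul_neg, smul_zero, sum_sub_distrib, sum_ite_irrel, sum_neg_distrib, sum_const_zero,
    sum_ite_eq, mem_univ, ↓reduceIte, sub_neg_eq_add, sum_add_distrib, hdiag, neg_smul, neg_neg]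
  simp only [sum_smul, two_mul, mul_two, smul_add, sum_add_distrib]
  rw [sum_comm (f := fun i l => T l i l • e i)]
  module

theorem sum_smul_mul_mul_sub_rotate_right [IsAddTorsionFree 𝕜]
    (he : ∀ i j, e i * e j + e j * e i = if i = j then -2 else 0)
    (hT : ∀ l i j, T l i j = -T l j i) :
    ∑ l, ∑ i, ∑ j, T l i j • (e l * e i * e j - e j * e l * e i)
      = (2 : 𝕜) • ∑ i, (∑ l, T l i l) • e i := by
  have hdiag : ∀ l i, T l i i = 0 := fun l i => self_eq_neg.mp (hT l i i)
  have hmove : ∀ l i j, e l * e i * e j - e j * e l * e i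
      = e l * (e j * e i + e i * e j) - (e j * e l + e l * e j) * e i := by
    intro l i j
    noncomm_ring
  simp only [hmove, he, mul_ite, mul_neg, mul_zero, ite_mul, neg_mul, zero_mul, smul_sub, smul_ite,
    smul_neg, smul_zero, sum_sub_distrib, sum_ite_eq', mem_univ, ↓reduceIte, hdiag, zero_smul,
    neg_zero, sub_neg_eq_add, zero_add]
  simp only [sum_smul, two_mul, smul_add, sum_add_distrib]
  rw [sum_comm (f := fun i l => T l i l • e i)]
  module

end Clifford

theorem sum_smul_mul_mul_eq_two_smul_sum_contract {ι 𝕜 A : Type*} [Fintype ι] [DecidableEq ι]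
    [Field 𝕜] [CharZero 𝕜] [Ring A] [Algebra 𝕜 A] {e : ι → A} {T : ι → ι → ι → 𝕜}
    (he : ∀ i j, e i * e j + e j * e i = if i = j then -2 else 0)
    (hT : ∀ l i j, T l i j = -T l j i) (hB : ∀ l i j, T l i j + T i j l + T j l i = 0) :
    ∑ l, ∑ i, ∑ j, T l i j • (e l * e i * e j) = (2 : 𝕜) • ∑ i, (∑ l, T l i l) • e i := by
  have hcyclic : ∑ l, ∑ i, ∑ j, T l i j • (e l * e i * e j)
      + ∑ l, ∑ i, ∑ j, T l i j • (e j * e l * e i)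
      + ∑ l, ∑ i, ∑ j, T l i j • (e i * e j * e l) = 0 := by
    rw [Fintype.sum_sum_sum_rotate fun l i j => T l i j • (e j * e l * e i),
      ← Fintype.sum_sum_sum_rotate fun l i j => T j l i • (e l * e i * e j)]
    simp only [← sum_add_distrib, ← add_smul, hB, zero_smul, sum_const_zero]
  have hright := sum_smul_mul_mul_sub_rotate_right he hT
  have hleft := sum_smul_mul_mul_sub_rotate_left he hT
  simp only [smul_sub, sum_sub_distrib] at hright hleft
  linear_combination (norm := module) (3 : 𝕜)⁻¹ • (hcyclic + hright + hleft)

theorem parallel_spinc_ricci_identity_general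
    {n : ℕ} {M : Type*} {S : Type*} [NormedAddCommGroup S] [InnerProductSpace ℂ S]
    (cm : M → Fin n → S →ₗ[ℂ] S)
    (cliff : ∀ (x : M) (i j : Fin n) (s : S),
      cm x i (cm x j s) + cm x j (cm x i s) = (-2 : ℂ) • (if i = j then s else 0))
    (R : M → Fin n → Fin n → Fin n → Fin n → ℝ)
    (hanti2 : ∀ x i j k l, R x i j k l = - R x i j l k)
    (hbianchi : ∀ x k l i j, R x k l i j + R x k i j l + R x k j l i = 0)
    (F : M → Fin n → Fin n → ℂ)
    (σ₀ : M → S)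
    (curv_id : ∀ (x : M) (k l : Fin n),
      ∑ i : Fin n, ∑ j : Fin n, R x k l i j • cm x i (cm x j (σ₀ x))
        = (2 * F x k l) • σ₀ x)
    (hindep : ∀ x : M, LinearIndependent ℂ (fun l : Fin n => cm x l (σ₀ x))) :
    (∀ (x : M) (k : Fin n),
        ∑ l : Fin n, (∑ j : Fin n, R x k j l j) • cm x l (σ₀ x)
          = ∑ l : Fin n, F x k l • cm x l (σ₀ x))
    ∧ ((∀ x k l, F x k l = 0) →
        ∀ (x : M) (k l : Fin n), (∑ j : Fin n, R x k j l j) = 0) := by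
  have hclifford : ∀ x i j, cm x i * cm x j + cm x j * cm x i = if i = j then -2 else 0 := by
    intro x i j
    ext s
    rw [LinearMap.add_apply, Module.End.mul_apply, Module.End.mul_apply, cliff]
    split_ifs <;> simp [ofNat_smul_eq_nsmul]
  have hricci : ∀ x k, ∑ l, (∑ j, R x k j l j) • cm x l (σ₀ x) = ∑ l, F x k l • cm x l (σ₀ x) := by
    intro x k
    have hcontract : ∑ l, ∑ i, ∑ j, R x k l i j • cm x l (cm x i (cm x j (σ₀ x)))
        = ∑ l, (2 * F x k l) • cm x l (σ₀ x) := by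
      refine sum_congr rfl fun l _ => ?_
      rw [← map_smul, ← curv_id x k l]
      simp only [map_sum, LinearMap.map_smul_of_tower]
    have key := LinearMap.congr_fun
      (sum_smul_mul_mul_eq_two_smul_sum_contract (hclifford x) (hanti2 x k) (hbianchi x k)) (σ₀ x)
    simp only [LinearMap.sum_apply, LinearMap.smul_apply, Module.End.mul_apply, hcontract,
      mul_smul, ← smul_sum] at key
    linear_combination (norm := module) (2 : ℂ)⁻¹ • key.symm
  refine ⟨hricci, fun hF x k l => ?_⟩
  have h := hricci x k
  simp only [hF, zero_smul, sum_const_zero] at h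
  exact Fintype.linearIndependent_iff.mp ((hindep x).restrict_scalars' ℝ) _ h l

/-- Setting as in the curvature identity for parallel spin^c spinors:
`∑_{i,j} R_{klij} e_i e_j·σ₀ = 2 F_{kl} σ₀`.  Contracting with `e_l` via the Clifford
relations and the first Bianchi identity gives `∑_l Ric_{kl} e_l·σ₀ = ∑_l F_{kl} e_l·σ₀`,
where `Ric_{kl} = ∑_j R_{kjlj}`.  In particular, if the spin^c structure comes from a spin
structure (`F = 0`), then (since the `e_l·σ₀` are linearly independent for `σ₀ ≠ 0`) the
metric is Ricci-flat. -/
theorem parallel_spinc_ricci_identity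
    {n : ℕ} {M : Type*} {S : Type*} [NormedAddCommGroup S] [InnerProductSpace ℂ S]
    (cm : M → Fin n → S →ₗ[ℂ] S)
    (cliff : ∀ (x : M) (i j : Fin n) (s : S),
      cm x i (cm x j s) + cm x j (cm x i s) = (-2 : ℂ) • (if i = j then s else 0))
    (R : M → Fin n → Fin n → Fin n → Fin n → ℝ)
    (hanti1 : ∀ x i j k l, R x i j k l = - R x j i k l)
    (hanti2 : ∀ x i j k l, R x i j k l = - R x i j l k)
    (hpair : ∀ x i j k l, R x i j k l = R x k l i j)
    (hbianchi : ∀ x k l i j, R x k l i j + R x k i j l + R x k j l i = 0)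
    (F : M → Fin n → Fin n → ℂ)
    (σ₀ : M → S) (hσ₀ : ∀ x, σ₀ x ≠ 0)
    (curv_id : ∀ (x : M) (k l : Fin n),
      ∑ i : Fin n, ∑ j : Fin n, R x k l i j • cm x i (cm x j (σ₀ x))
        = (2 * F x k l) • σ₀ x)
    (hindep : ∀ x : M, LinearIndependent ℂ (fun l : Fin n => cm x l (σ₀ x))) :
    (∀ (x : M) (k : Fin n),
        ∑ l : Fin n, (∑ j : Fin n, R x k j l j) • cm x l (σ₀ x)
          = ∑ l : Fin n, F x k l • cm x l (σ₀ x))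
    ∧ ((∀ x k l, F x k l = 0) →
        ∀ (x : M) (k l : Fin n), (∑ j : Fin n, R x k j l j) = 0) :=
  parallel_spinc_ricci_identity_general cm cliff R hanti2 hbianchi F σ₀ curv_id hindep
end
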